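/- arXiv:1306.5683 — 2 statements merged into one kernel-verified Lean document; each statement's English description precedes it below -/
import Mathlib

section
/- (Associativity of the groupoid product built from a non-Abelian 1-cocycle.) Let (G, H, ρ, j) be a crossed module of groups and let (λ, g) be a non-Abelian 1-cocycle with values in G → H with respect to an open cover (U_i)_{i∈I} of a topological space N. Then for all i, j, k, l ∈ I, every x ∈ U_{ijkl}, and all a, b, c ∈ G: (a · λ_{ij}(x)(b) · g_{ijk}(x)) · λ_{ik}(x)(c) · g_{ikl}(x) = a · λ_{ij}(x)(b · λ_{jk}(x)(c) · g_{jkl}(x)) · g_{ijl}(x), where λ_{ij}(x)(·) denotes the automorphism j(λ_{ij}(x)) of G. -/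
/-- Associativity of the groupoid product built from a non-Abelian 1-cocycle. -/
theorem cocycle_groupoid_product_assoc
    {G H N I : Type*} [Group G] [Group H] [TopologicalSpace N]
    (ρ : G →* H) (jmap : H →* MulAut G)
    (hcm1 : ∀ (h : H) (a : G), ρ (jmap h a) = h * ρ a * h⁻¹)
    (hcm2 : ∀ (a b : G), jmap (ρ a) b = a * b * a⁻¹)
    (U : I → Set N) (hUopen : ∀ i, IsOpen (U i)) (hUcover : (⋃ i, U i) = Set.univ)
    (lam : I → I → N → H) (gc : I → I → I → N → G)
    (hC1 : ∀ i j k x, x ∈ U i ∩ U j ∩ U k →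
        ρ (gc i j k x) * lam i k x = lam i j x * lam j k x)
    (hC2 : ∀ i j k l x, x ∈ U i ∩ U j ∩ U k ∩ U l →
        gc i j k x * gc i k l x = jmap (lam i j x) (gc j k l x) * gc i j l x)
    (hC3 : ∀ i j x, x ∈ U i ∩ U j → gc i i j x = 1)
    :
    ∀ i j k l x, x ∈ U i ∩ U j ∩ U k ∩ U l → ∀ a b c : G,
      (a * jmap (lam i j x) b * gc i j k x) * jmap (lam i k x) c * gc i k l x
        = a * jmap (lam i j x) (b * jmap (lam j k x) c * gc j k l x) * gc i j l x := by
  intro i j k l x hx a b c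
  have h1 := hC1 i j k x hx.1
  have h2 := hC2 i j k l x hx
  have key : jmap (lam i k x) c
      = (gc i j k x)⁻¹ * jmap (lam i j x) (jmap (lam j k x) c) * gc i j k x := by
    have h1' := congrArg (fun h => jmap h c) h1
    simp only [map_mul, MulAut.mul_apply, hcm2] at h1'
    rw [← h1']; group
  calc (a * jmap (lam i j x) b * gc i j k x) * jmap (lam i k x) c * gc i k l x
      = a * jmap (lam i j x) b * jmap (lam i j x) (jmap (lam j k x) c)
          * (gc i j k x * gc i k l x) := by rw [key]; group
    _ = a * jmap (lam i j x) b * jmap (lam i j x) (jmap (lam j k x) c)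
          * (jmap (lam i j x) (gc j k l x) * gc i j l x) := by rw [h2]
    _ = a * jmap (lam i j x) (b * jmap (lam j k x) c * gc j k l x) * gc i j l x := by
        simp only [map_mul]; group
end

section
/- (Groupoid-morphism identity induced by a coboundary; identity (eq:bothsides) in Proposition 2.18.) Let (G, H, ρ, j) be a crossed module of groups, let (λ, g) and (λ', g') be non-Abelian 1-cocycles with values in G → H with respect to an open cover (U_i)_{i∈I} of a topological space N, and let (r, v) be a 1-coboundary relating (λ, g) and (λ', g'). Then for all i, j, k ∈ I, every x ∈ U_{ijk}, and all a, b ∈ G: r_i(x)(a · λ_{ij}(x)(b) · g_{ijk}(x)) · v_{ik}(x)⁻¹ = r_i(x)(a) · v_{ij}(x)⁻¹ · λ'_{ij}(x)(r_j(x)(b) · v_{jk}(x)⁻¹) · g'_{ijk}(x), where h(·) denotes the automorphism j(h) of G. -/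
/-- Groupoid-morphism identity induced by a coboundary
(identity (eq:bothsides) in Proposition 2.18). -/
theorem coboundary_groupoid_morphism_identity
    {G H N I : Type*} [Group G] [Group H] [TopologicalSpace N]
    (ρ : G →* H) (jmap : H →* MulAut G)
    (hcm1 : ∀ (h : H) (a : G), ρ (jmap h a) = h * ρ a * h⁻¹)
    (hcm2 : ∀ (a b : G), jmap (ρ a) b = a * b * a⁻¹)
    (U : I → Set N) (hUopen : ∀ i, IsOpen (U i)) (hUcover : (⋃ i, U i) = Set.univ)
    (lam : I → I → N → H) (gc : I → I → I → N → G)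
    (hC1 : ∀ i j k x, x ∈ U i ∩ U j ∩ U k →
        ρ (gc i j k x) * lam i k x = lam i j x * lam j k x)
    (hC2 : ∀ i j k l x, x ∈ U i ∩ U j ∩ U k ∩ U l →
        gc i j k x * gc i k l x = jmap (lam i j x) (gc j k l x) * gc i j l x)
    (hC3 : ∀ i j x, x ∈ U i ∩ U j → gc i i j x = 1)
    (lam' : I → I → N → H) (gc' : I → I → I → N → G)
    (hC1' : ∀ i j k x, x ∈ U i ∩ U j ∩ U k →
        ρ (gc' i j k x) * lam' i k x = lam' i j x * lam' j k x)
    (hC2' : ∀ i j k l x, x ∈ U i ∩ U j ∩ U k ∩ U l →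
        gc' i j k x * gc' i k l x = jmap (lam' i j x) (gc' j k l x) * gc' i j l x)
    (hC3' : ∀ i j x, x ∈ U i ∩ U j → gc' i i j x = 1)
    (r : I → N → H) (v : I → I → N → G)
    (hB1 : ∀ i j x, x ∈ U i ∩ U j →
        lam' i j x = ρ (v i j x) * r i x * lam i j x * (r j x)⁻¹)
    (hB2 : ∀ i j k x, x ∈ U i ∩ U j ∩ U k →
        gc' i j k x * v i k x
          = jmap (lam' i j x) (v j k x) * v i j x * jmap (r i x) (gc i j k x))
    :
    ∀ i j k x, x ∈ U i ∩ U j ∩ U k → ∀ a b : G,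
      jmap (r i x) (a * jmap (lam i j x) b * gc i j k x) * (v i k x)⁻¹
        = jmap (r i x) a * (v i j x)⁻¹
            * jmap (lam' i j x) (jmap (r j x) b * (v j k x)⁻¹) * gc' i j k x := by
  intro i j k x hx a b
  have h1 := hB1 i j x hx.1
  have h2 := hB2 i j k x hx
  have hvik : (v i k x)⁻¹ = (jmap (r i x) (gc i j k x))⁻¹ * (v i j x)⁻¹
      * (jmap (lam' i j x) (v j k x))⁻¹ * gc' i j k x := by
    have hv : v i k x = (gc' i j k x)⁻¹
        * (jmap (lam' i j x) (v j k x) * v i j x * jmap (r i x) (gc i j k x)) := by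
      rw [← h2]; group
    rw [hv]; group
  have key : jmap (r i x) (jmap (lam i j x) b)
      = (v i j x)⁻¹ * jmap (lam' i j x) (jmap (r j x) b) * v i j x := by
    rw [h1]
    simp [map_mul, map_inv, hcm2]
    group
  rw [map_mul, map_mul, key, hvik, map_mul, map_inv]
  group
end
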